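/- Suppose |S| < ∞, |A| < ∞, and Assumption 2 is satisfied. If (i) for each t there exists δ_t > 0 such that p_{π_t}(a|H_t) ≥ δ_t for all a ∈ A and all histories H_t, and (ii) every pair (s, s') ∈ S × S is connected with respect to P_{θ,π} for every θ ∈ Θ, then there exist positive functions μ and ν on S × A satisfying Assumption 1 for the policy π. -/
import Mathlib


/-!
STATEMENT 1 (Theorem 1 of the paper): suppose `|S| < ∞`, `|A| < ∞` and Assumption 2 holds.
If (i) for each `t` there exists `δ_t > 0` with `p_{π_t}(a|H_t) ≥ δ_t` for all `a` and all
histories, and (ii) every pair `(s, s')` is connected w.r.t. `P_{θ,π}` for every `θ ∈ Θ`,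
then there exist positive functions `μ` and `ν` on `S × A` satisfying Assumption 1 for the
policy `π`.

In the finite setting the process is described concretely by the transition mass function
`p θ s a s'`, the policy mass functions `pol t H_t a`, and the initial state; the
conditional densities `p^{H̃_i,j}_{θ,π}` (w.r.t. counting measure) are the explicit sums
`condSA` below, and `reach` gives `P_{θ,π}(S_{i+j} = s' | S_i = s, H̃_{i−1})`.
-/

noncomputable section

/-- The history `H_t = (S_0, A_0, …, S_{t-1}, A_{t-1}, S_t)` (rewards omitted). -/
abbrev Hist (S A : Type*) (t : ℕ) : Type _ := (Fin (t + 1) → S) × (Fin t → A)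

/-- The extended history `H̃_t = (H_t, A_t)` (rewards omitted). -/
abbrev HistT (S A : Type*) (t : ℕ) : Type _ := (Fin (t + 1) → S) × (Fin (t + 1) → A)

variable {S A Θ : Type*}

/-- Assumption 1 of the paper for the conditional densities `q θ i H̃_i j`. -/
def Assumption1 (q : Θ → (i : ℕ) → HistT S A i → ℕ → S × A → ℝ)
    (k l : ℕ) (α : ℕ → ℝ) (μ ν : S × A → ℝ) : Prop :=
  0 < k ∧ 0 < l ∧ (∀ i, 0 < α i) ∧ (∀ i j, i ≤ j → α j ≤ α i) ∧
    (∀ sa, 0 ≤ μ sa) ∧ (∀ sa, 0 ≤ ν sa) ∧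
    (∀ (θ : Θ) (i : ℕ) (h : HistT S A i) (sa : S × A),
      α i * μ sa ≤ (1 / (k : ℝ)) * ∑ j ∈ Finset.Icc 1 k, q θ i h j sa) ∧
    (∀ (θ : Θ) (i : ℕ) (h : HistT S A i) (sa : S × A), q θ i h l sa ≤ ν sa)

variable [Fintype S] [Fintype A] [DecidableEq S] [DecidableEq A]

/-- Extend a history `H_i` by an action and a new state. -/
def extendH (i : ℕ) (h : Hist S A i) (a : A) (s' : S) : Hist S A (i + 1) :=
  (Fin.snoc h.1 s', Fin.snoc h.2 a)

/-- Extend an extended history `H̃_i` by a new state and a new action. -/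
def extendHT (i : ℕ) (h : HistT S A i) (s' : S) (a' : A) : HistT S A (i + 1) :=
  (Fin.snoc h.1 s', Fin.snoc h.2 a')

/-- `reach p pol θ j i h s'` is the conditional probability
`P_{θ,π}(S_{i+j} = s' | H_i = h)` in the finite MDP with transition mass function `p` and
policy mass functions `pol`. -/
def reach (p : Θ → S → A → S → ℝ) (pol : (t : ℕ) → Hist S A t → A → ℝ) (θ : Θ) :
    (j : ℕ) → (i : ℕ) → Hist S A i → S → ℝ
  | 0, i, h, s' => if h.1 (Fin.last i) = s' then 1 else 0
  | j + 1, i, h, s' =>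
      ∑ a : A, ∑ s'' : S,
        pol i h a * p θ (h.1 (Fin.last i)) a s'' *
          reach p pol θ j (i + 1) (extendH i h a s'') s'

/-- `condSA p pol θ j i h sa` is the conditional density (w.r.t. counting measure) of
`(S_{i+j}, A_{i+j})` given `H̃_i = h`, i.e. `p^{H̃_i,j}_{θ,π}(sa)`, for `j ≥ 1`. -/
def condSA (p : Θ → S → A → S → ℝ) (pol : (t : ℕ) → Hist S A t → A → ℝ) (θ : Θ) :
    (j : ℕ) → (i : ℕ) → HistT S A i → S × A → ℝ
  | 0, i, h, sa => if h.1 (Fin.last i) = sa.1 ∧ h.2 (Fin.last i) = sa.2 then 1 else 0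
  | j + 1, i, h, sa =>
      ∑ s' : S, ∑ a' : A,
        p θ (h.1 (Fin.last i)) (h.2 (Fin.last i)) s' *
          pol (i + 1) (Fin.snoc h.1 s', h.2) a' *
          condSA p pol θ j (i + 1) (extendHT i h s' a') sa

/-- helper: product over subset with factors in [0,1]. -/
lemma prod_subset_le_aux {s t : Finset ℕ} (hst : s ⊆ t) (f : ℕ → ℝ)
    (h0 : ∀ x, 0 ≤ f x) (h1 : ∀ x, f x ≤ 1) :
    ∏ x ∈ t, f x ≤ ∏ x ∈ s, f x := by
  rw [← Finset.prod_sdiff hst]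
  have h2 : ∏ x ∈ t \ s, f x ≤ 1 := Finset.prod_le_one (fun x _ => h0 x) (fun x _ => h1 x)
  have h3 : 0 ≤ ∏ x ∈ s, f x := Finset.prod_nonneg (fun x _ => h0 x)
  nlinarith [Finset.prod_nonneg (fun x (_ : x ∈ t \ s) => h0 x)]

lemma condSA_nonneg (p : Θ → S → A → S → ℝ) (pol : (t : ℕ) → Hist S A t → A → ℝ)
    (hp : ∀ θ s a s', 0 ≤ p θ s a s') (hpol : ∀ t (h : Hist S A t) a, 0 ≤ pol t h a)
    (θ : Θ) : ∀ (j i : ℕ) (h : HistT S A i) (sa : S × A), 0 ≤ condSA p pol θ j i h sa := by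
  intro j
  induction j with
  | zero => intro i h sa; rw [condSA]; positivity
  | succ j ih =>
      intro i h sa
      rw [condSA]
      refine Finset.sum_nonneg fun s' _ => Finset.sum_nonneg fun a' _ => ?_
      exact mul_nonneg (mul_nonneg (hp _ _ _ _) (hpol _ _ _))
        (ih (i+1) (extendHT i h s' a') sa)

lemma condSA_le_one (p : Θ → S → A → S → ℝ) (pol : (t : ℕ) → Hist S A t → A → ℝ)
    (hp : ∀ θ s a s', 0 ≤ p θ s a s') (hp_sum : ∀ θ s a, ∑ s' : S, p θ s a s' = 1)
    (hpol : ∀ t (h : Hist S A t) a, 0 ≤ pol t h a)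
    (hpol_sum : ∀ t (h : Hist S A t), ∑ a : A, pol t h a = 1)
    (θ : Θ) : ∀ (j i : ℕ) (h : HistT S A i) (sa : S × A), condSA p pol θ j i h sa ≤ 1 := by
  intro j
  induction j with
  | zero => intro i h sa; rw [condSA]; split <;> norm_num
  | succ j ih =>
      intro i h sa
      rw [condSA]
      have hb : ∀ s' a', p θ (h.1 (Fin.last i)) (h.2 (Fin.last i)) s' *
          pol (i + 1) (Fin.snoc h.1 s', h.2) a' *
          condSA p pol θ j (i + 1) (extendHT i h s' a') sa ≤
          p θ (h.1 (Fin.last i)) (h.2 (Fin.last i)) s' *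
          pol (i + 1) (Fin.snoc h.1 s', h.2) a' := by
        intro s' a'
        have h1 := ih (i+1) (extendHT i h s' a') sa
        have h2 := condSA_nonneg p pol hp hpol θ j (i+1) (extendHT i h s' a') sa
        have h3 : 0 ≤ p θ (h.1 (Fin.last i)) (h.2 (Fin.last i)) s' *
            pol (i + 1) (Fin.snoc h.1 s', h.2) a' := by
          have := hp θ (h.1 (Fin.last i)) (h.2 (Fin.last i)) s'
          have := hpol (i+1) (Fin.snoc h.1 s', h.2) a'
          positivity
        nlinarith
      calc ∑ s' : S, ∑ a' : A, p θ (h.1 (Fin.last i)) (h.2 (Fin.last i)) s' *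
            pol (i + 1) (Fin.snoc h.1 s', h.2) a' *
            condSA p pol θ j (i + 1) (extendHT i h s' a') sa
          ≤ ∑ s' : S, ∑ a' : A, p θ (h.1 (Fin.last i)) (h.2 (Fin.last i)) s' *
            pol (i + 1) (Fin.snoc h.1 s', h.2) a' := by
            refine Finset.sum_le_sum fun s' _ => Finset.sum_le_sum fun a' _ => hb s' a'
        _ = ∑ s' : S, p θ (h.1 (Fin.last i)) (h.2 (Fin.last i)) s' *
            ∑ a' : A, pol (i + 1) (Fin.snoc h.1 s', h.2) a' := by
            simp [Finset.mul_sum]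
        _ = 1 := by
            simp only [hpol_sum]
            simpa using hp_sum θ (h.1 (Fin.last i)) (h.2 (Fin.last i))

lemma reach_nonneg (p : Θ → S → A → S → ℝ) (pol : (t : ℕ) → Hist S A t → A → ℝ)
    (hp : ∀ θ s a s', 0 ≤ p θ s a s') (hpol : ∀ t (h : Hist S A t) a, 0 ≤ pol t h a)
    (θ : Θ) : ∀ (j i : ℕ) (h : Hist S A i) (s' : S), 0 ≤ reach p pol θ j i h s' := by
  intro j
  induction j with
  | zero => intro i h s'; rw [reach]; positivity
  | succ j ih =>
      intro i h s'
      rw [reach]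
      refine Finset.sum_nonneg fun a _ => Finset.sum_nonneg fun s'' _ => ?_
      exact mul_nonneg (mul_nonneg (hpol _ _ _) (hp _ _ _ _)) (ih _ _ _)

/-- Purely combinatorial reachability of length `j` in the support graph of `p0`. -/
def PathN (p0 : S → A → S → ℝ) : ℕ → S → S → Prop
  | 0, s, t => s = t
  | j + 1, s, t => ∃ u a, 0 < p0 s a u ∧ PathN p0 j u t

lemma reach_pos_path (p : Θ → S → A → S → ℝ) (pol : (t : ℕ) → Hist S A t → A → ℝ)
    (hp : ∀ θ s a s', 0 ≤ p θ s a s') (hpol : ∀ t (h : Hist S A t) a, 0 ≤ pol t h a)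
    (θ : Θ) : ∀ (j i : ℕ) (h : Hist S A i) (t : S),
      0 < reach p pol θ j i h t → PathN (p θ) j (h.1 (Fin.last i)) t := by
  intro j
  induction j with
  | zero =>
      intro i h t hpos
      rw [reach] at hpos
      by_contra hne
      simp only [PathN] at hne
      rw [if_neg hne] at hpos
      exact lt_irrefl 0 hpos
  | succ j ih =>
      intro i h t hpos
      rw [reach] at hpos
      have : ∃ a ∈ Finset.univ (α := A), 0 < ∑ s'' : S,
          pol i h a * p θ (h.1 (Fin.last i)) a s'' *
            reach p pol θ j (i + 1) (extendH i h a s'') t := by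
        by_contra hcon
        push_neg at hcon
        have : ∑ a : A, ∑ s'' : S, pol i h a * p θ (h.1 (Fin.last i)) a s'' *
            reach p pol θ j (i + 1) (extendH i h a s'') t ≤ 0 :=
          Finset.sum_nonpos fun a ha => hcon a ha
        linarith
      obtain ⟨a, _, ha⟩ := this
      have : ∃ s'' ∈ Finset.univ (α := S), 0 < pol i h a * p θ (h.1 (Fin.last i)) a s'' *
          reach p pol θ j (i + 1) (extendH i h a s'') t := by
        by_contra hcon
        push_neg at hcon
        have : ∑ s'' : S, pol i h a * p θ (h.1 (Fin.last i)) a s'' *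
            reach p pol θ j (i + 1) (extendH i h a s'') t ≤ 0 :=
          Finset.sum_nonpos fun s'' hs => hcon s'' hs
        linarith
      obtain ⟨s'', _, hterm⟩ := this
      have hr0 : 0 ≤ reach p pol θ j (i + 1) (extendH i h a s'') t := reach_nonneg p pol hp hpol θ _ _ _ _
      have hpq : 0 ≤ pol i h a * p θ (h.1 (Fin.last i)) a s'' :=
        mul_nonneg (hpol _ _ _) (hp _ _ _ _)
      have hrpos : 0 < reach p pol θ j (i + 1) (extendH i h a s'') t := by
        rcases lt_or_eq_of_le hr0 with h' | h'
        · exact h'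
        · rw [← h'] at hterm; simp at hterm
      have hppos : 0 < p θ (h.1 (Fin.last i)) a s'' := by
        by_contra hcon
        push_neg at hcon
        have h0 : p θ (h.1 (Fin.last i)) a s'' = 0 := le_antisymm hcon (hp _ _ _ _)
        rw [h0] at hterm; simp at hterm
      have hlast : (extendH i h a s'').1 (Fin.last (i+1)) = s'' := by
        simp [extendH]
      have := ih (i+1) (extendH i h a s'') t hrpos
      rw [hlast] at this
      exact ⟨s'', a, hppos, this⟩

lemma condSA_lower (p : Θ → S → A → S → ℝ) (pol : (t : ℕ) → Hist S A t → A → ℝ)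
    (θ0 : Θ)
    (hp : ∀ θ s a s', 0 ≤ p θ s a s') (hpol : ∀ t (h : Hist S A t) a, 0 ≤ pol t h a)
    (κ : ℝ) (hκpos : 0 < κ)
    (hκ : ∀ (θ : Θ) (s : S) (a : A) (u : S), 0 < p θ0 s a u → κ ≤ p θ s a u)
    (δ : ℕ → ℝ) (hδpos : ∀ t, 0 < δ t) (hδle : ∀ t (h : Hist S A t) a, δ t ≤ pol t h a) :
    ∀ (j : ℕ) (u t : S), PathN (p θ0) j u t → ∀ (θ : Θ) (i : ℕ) (h : HistT S A i) (b : A),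
      0 < p θ0 (h.1 (Fin.last i)) (h.2 (Fin.last i)) u →
      κ ^ (j + 1) * ∏ t' ∈ Finset.Ico (i + 1) (i + j + 2), δ t' ≤
        condSA p pol θ (j + 1) i h (t, b) := by
  intro j
  induction j with
  | zero =>
      intro u t hpath θ i h b hfirst
      have hut : u = t := hpath
      subst hut
      rw [condSA]
      have hterm : ∀ s' a', 0 ≤ p θ (h.1 (Fin.last i)) (h.2 (Fin.last i)) s' *
          pol (i + 1) (Fin.snoc h.1 s', h.2) a' *
          condSA p pol θ 0 (i + 1) (extendHT i h s' a') (u, b) := fun s' a' =>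
        mul_nonneg (mul_nonneg (hp _ _ _ _) (hpol _ _ _))
          (condSA_nonneg p pol hp hpol θ 0 _ _ _)
      have hsingle : p θ (h.1 (Fin.last i)) (h.2 (Fin.last i)) u *
          pol (i + 1) (Fin.snoc h.1 u, h.2) b *
          condSA p pol θ 0 (i + 1) (extendHT i h u b) (u, b) ≤
          ∑ s' : S, ∑ a' : A, p θ (h.1 (Fin.last i)) (h.2 (Fin.last i)) s' *
            pol (i + 1) (Fin.snoc h.1 s', h.2) a' *
            condSA p pol θ 0 (i + 1) (extendHT i h s' a') (u, b) := by
        have h1 : ∀ s' ∈ Finset.univ (α := S), 0 ≤ ∑ a' : A,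
            p θ (h.1 (Fin.last i)) (h.2 (Fin.last i)) s' *
            pol (i + 1) (Fin.snoc h.1 s', h.2) a' *
            condSA p pol θ 0 (i + 1) (extendHT i h s' a') (u, b) := fun s' _ =>
          Finset.sum_nonneg fun a' _ => hterm s' a'
        calc p θ (h.1 (Fin.last i)) (h.2 (Fin.last i)) u *
            pol (i + 1) (Fin.snoc h.1 u, h.2) b *
            condSA p pol θ 0 (i + 1) (extendHT i h u b) (u, b)
            ≤ ∑ a' : A, p θ (h.1 (Fin.last i)) (h.2 (Fin.last i)) u *
              pol (i + 1) (Fin.snoc h.1 u, h.2) a' *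
              condSA p pol θ 0 (i + 1) (extendHT i h u a') (u, b) :=
              Finset.single_le_sum (fun a' _ => hterm u a') (Finset.mem_univ b)
          _ ≤ _ := Finset.single_le_sum h1 (Finset.mem_univ u)
      have hind : condSA p pol θ 0 (i + 1) (extendHT i h u b) (u, b) = 1 := by
        rw [condSA]
        simp [extendHT]
      rw [hind, mul_one] at hsingle
      refine le_trans ?_ hsingle
      have hprod : ∏ t' ∈ Finset.Ico (i + 1) (i + 0 + 2), δ t' = δ (i + 1) := by
        have : i + 0 + 2 = (i + 1) + 1 := by omega
        rw [this, Finset.prod_Ico_succ_top (by omega)]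
        simp
      rw [hprod, pow_one]
      exact mul_le_mul (hκ θ _ _ _ hfirst) (hδle (i+1) _ b) (le_of_lt (hδpos _))
        (hp _ _ _ _)
  | succ j ih =>
      intro u t hpath θ i h b hfirst
      obtain ⟨v, a1, hpv, hpath'⟩ := hpath
      rw [condSA]
      have hterm : ∀ s' a', 0 ≤ p θ (h.1 (Fin.last i)) (h.2 (Fin.last i)) s' *
          pol (i + 1) (Fin.snoc h.1 s', h.2) a' *
          condSA p pol θ (j + 1) (i + 1) (extendHT i h s' a') (t, b) := fun s' a' =>
        mul_nonneg (mul_nonneg (hp _ _ _ _) (hpol _ _ _))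
          (condSA_nonneg p pol hp hpol θ _ _ _ _)
      have hsingle : p θ (h.1 (Fin.last i)) (h.2 (Fin.last i)) u *
          pol (i + 1) (Fin.snoc h.1 u, h.2) a1 *
          condSA p pol θ (j + 1) (i + 1) (extendHT i h u a1) (t, b) ≤
          ∑ s' : S, ∑ a' : A, p θ (h.1 (Fin.last i)) (h.2 (Fin.last i)) s' *
            pol (i + 1) (Fin.snoc h.1 s', h.2) a' *
            condSA p pol θ (j + 1) (i + 1) (extendHT i h s' a') (t, b) := by
        have h1 : ∀ s' ∈ Finset.univ (α := S), 0 ≤ ∑ a' : A,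
            p θ (h.1 (Fin.last i)) (h.2 (Fin.last i)) s' *
            pol (i + 1) (Fin.snoc h.1 s', h.2) a' *
            condSA p pol θ (j + 1) (i + 1) (extendHT i h s' a') (t, b) := fun s' _ =>
          Finset.sum_nonneg fun a' _ => hterm s' a'
        calc p θ (h.1 (Fin.last i)) (h.2 (Fin.last i)) u *
            pol (i + 1) (Fin.snoc h.1 u, h.2) a1 *
            condSA p pol θ (j + 1) (i + 1) (extendHT i h u a1) (t, b)
            ≤ ∑ a' : A, p θ (h.1 (Fin.last i)) (h.2 (Fin.last i)) u *
              pol (i + 1) (Fin.snoc h.1 u, h.2) a' *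
              condSA p pol θ (j + 1) (i + 1) (extendHT i h u a') (t, b) :=
              Finset.single_le_sum (fun a' _ => hterm u a') (Finset.mem_univ a1)
          _ ≤ _ := Finset.single_le_sum h1 (Finset.mem_univ u)
      refine le_trans ?_ hsingle
      have hfirst' : 0 < p θ0 ((extendHT i h u a1).1 (Fin.last (i+1)))
          ((extendHT i h u a1).2 (Fin.last (i+1))) v := by
        simpa [extendHT] using hpv
      have hIH := ih v t hpath' θ (i + 1) (extendHT i h u a1) b hfirst'
      have hprodsplit : ∏ t' ∈ Finset.Ico (i + 1) (i + (j + 1) + 2), δ t' =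
          δ (i + 1) * ∏ t' ∈ Finset.Ico (i + 2) (i + 1 + j + 2), δ t' := by
        have h2 : i + (j + 1) + 2 = i + 1 + j + 2 := by omega
        rw [h2, Finset.prod_eq_prod_Ico_succ_bot (by omega)]
      rw [hprodsplit]
      have hκp : κ ≤ p θ (h.1 (Fin.last i)) (h.2 (Fin.last i)) u := hκ θ _ _ _ hfirst
      have hδp : δ (i + 1) ≤ pol (i + 1) (Fin.snoc h.1 u, h.2) a1 := hδle (i + 1) _ a1
      have hprodpos : 0 ≤ ∏ t' ∈ Finset.Ico (i + 2) (i + 1 + j + 2), δ t' :=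
        Finset.prod_nonneg fun x _ => le_of_lt (hδpos x)
      calc κ ^ (j + 1 + 1) * (δ (i + 1) * ∏ t' ∈ Finset.Ico (i + 2) (i + 1 + j + 2), δ t')
          = (κ * δ (i + 1)) * (κ ^ (j + 1) * ∏ t' ∈ Finset.Ico (i + 2) (i + 1 + j + 2), δ t') := by
            ring
        _ ≤ (p θ (h.1 (Fin.last i)) (h.2 (Fin.last i)) u *
              pol (i + 1) (Fin.snoc h.1 u, h.2) a1) *
            condSA p pol θ (j + 1) (i + 1) (extendHT i h u a1) (t, b) := by
            have hIH' : κ ^ (j + 1) * ∏ t' ∈ Finset.Ico (i + 2) (i + 1 + j + 2), δ t' ≤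
                condSA p pol θ (j + 1) (i + 1) (extendHT i h u a1) (t, b) := by
              have : i + 1 + 1 = i + 2 := by omega
              rw [← this]
              exact hIH
            refine mul_le_mul ?_ hIH' (by positivity) ?_
            · exact mul_le_mul hκp hδp (le_of_lt (hδpos _)) (hp _ _ _ _)
            · exact mul_nonneg (hp _ _ _ _) (hpol _ _ _)
        _ = _ := by ring

/-- `(s, s')` is connected w.r.t. `P_{θ,π}`: for every `i ≥ 0` there exists `j ≥ 1` such
that `P_{θ,π}(S_{i+j} = s' | S_i = s, H̃_{i−1}) > 0` for all possible `H̃_{i−1}`. -/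
def ConnectedPair (p : Θ → S → A → S → ℝ) (pol : (t : ℕ) → Hist S A t → A → ℝ)
    (θ : Θ) (s s' : S) : Prop :=
  ∀ i : ℕ, ∃ j ≥ 1, ∀ h : Hist S A i, h.1 (Fin.last i) = s →
    0 < reach p pol θ j i h s'

/-- **Theorem 1.** With `|S| < ∞`, `|A| < ∞`, under Assumption 2, if the policy mass
functions are bounded below by some `δ_t > 0` at each time `t` and every pair of states is
connected w.r.t. `P_{θ,π}` for every `θ`, then there exist positive functions `μ`, `ν`
(together with `k`, `l` and a non-increasing positive sequence `α`) satisfying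
Assumption 1. -/
theorem assumption1_of_finite_connected
    (p : Θ → S → A → S → ℝ) (pol : (t : ℕ) → Hist S A t → A → ℝ) (θ0 : Θ)
    -- `p` and `pol` are transition/action probability mass functions
    (hp_nonneg : ∀ θ s a s', 0 ≤ p θ s a s')
    (hp_sum : ∀ θ s a, ∑ s' : S, p θ s a s' = 1)
    (hpol_nonneg : ∀ t (h : Hist S A t) a, 0 ≤ pol t h a)
    (hpol_sum : ∀ t (h : Hist S A t), ∑ a : A, pol t h a = 1)
    -- Assumption 2
    (c d : ℝ) (hc : 0 < c) (hcd : c < d)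
    (hA2 : ∀ (θ : Θ) (s s' : S) (a : A),
      c * p θ0 s a s' ≤ p θ s a s' ∧ p θ s a s' ≤ d * p θ0 s a s')
    -- (i): the policy puts mass at least `δ_t > 0` on every action
    (hδ : ∀ t : ℕ, ∃ δ > (0 : ℝ), ∀ (h : Hist S A t) (a : A), δ ≤ pol t h a)
    -- (ii): every pair of states is connected w.r.t. `P_{θ,π}` for every `θ`
    (hconn : ∀ (θ : Θ) (s s' : S), ConnectedPair p pol θ s s') :
    ∃ (k l : ℕ) (α : ℕ → ℝ) (μ ν : S × A → ℝ),
      (∀ sa, 0 < μ sa) ∧ (∀ sa, 0 < ν sa) ∧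
      Assumption1 (fun θ i h j sa => condSA p pol θ j i h sa) k l α μ ν := by
  by_cases hSA : Nonempty S ∧ Nonempty A
  · obtain ⟨hS, hA⟩ := hSA
    choose δ hδpos hδle using hδ
    set δ' : ℕ → ℝ := fun t => min (δ t) 1 with hδ'def
    have hδ'pos : ∀ t, 0 < δ' t := fun t => lt_min (hδpos t) one_pos
    have hδ'le : ∀ t (h : Hist S A t) a, δ' t ≤ pol t h a := fun t h a =>
      le_trans (min_le_left _ _) (hδle t h a)
    have hδ'1 : ∀ t, δ' t ≤ 1 := fun t => min_le_right _ _
    -- every state-action pair has a successor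
    have hex : ∀ s a, ∃ u, 0 < p θ0 s a u := by
      intro s a
      by_contra hcon
      push_neg at hcon
      have hz : ∑ s' : S, p θ0 s a s' = 0 :=
        Finset.sum_eq_zero fun s' _ => le_antisymm (hcon s') (hp_nonneg θ0 s a s')
      rw [hp_sum θ0 s a] at hz
      norm_num at hz
    -- the minimal positive transition probability under θ0
    obtain ⟨s₀⟩ := hS
    obtain ⟨a₀⟩ := hA
    set Pos : Finset (S × A × S) :=
      Finset.univ.filter (fun x => 0 < p θ0 x.1 x.2.1 x.2.2) with hPosdef
    have hPosne : Pos.Nonempty := by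
      obtain ⟨u, hu⟩ := hex s₀ a₀
      exact ⟨(s₀, a₀, u), by simp [hPosdef, hu]⟩
    set κ0 : ℝ := Pos.inf' hPosne (fun x => p θ0 x.1 x.2.1 x.2.2) with hκ0def
    have hκ0pos : 0 < κ0 := by
      rw [hκ0def, Finset.lt_inf'_iff]
      intro x hx
      simpa [hPosdef] using hx
    set κ : ℝ := min c 1 * min κ0 1 with hκdef
    have hκpos : 0 < κ := mul_pos (lt_min hc one_pos) (lt_min hκ0pos one_pos)
    have hκ1 : κ ≤ 1 := by
      rw [hκdef]
      nlinarith [min_le_right c 1, min_le_right κ0 1, lt_min hc one_pos, lt_min hκ0pos one_pos]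
    have hκle : ∀ (θ : Θ) (s : S) (a : A) (u : S), 0 < p θ0 s a u → κ ≤ p θ s a u := by
      intro θ s a u hu
      have hmem : (s, a, u) ∈ Pos := by simp [hPosdef, hu]
      have h1 : κ0 ≤ p θ0 s a u :=
        Finset.inf'_le (fun x : S × A × S => p θ0 x.1 x.2.1 x.2.2) hmem
      have h2 : c * p θ0 s a u ≤ p θ s a u := (hA2 θ s u a).1
      have hm1 : min c 1 ≤ c := min_le_left _ _
      have hm2 : min κ0 1 ≤ κ0 := min_le_left _ _
      have hm1' : 0 < min c 1 := lt_min hc one_pos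
      have hm2' : 0 < min κ0 1 := lt_min hκ0pos one_pos
      nlinarith
    -- a path for each triple (s, a, t)
    have hpathex : ∀ x : S × A × S, ∃ m u, 0 < p θ0 x.1 x.2.1 u ∧ PathN (p θ0) m u x.2.2 := by
      rintro ⟨s, a, t⟩
      obtain ⟨u, hu⟩ := hex s a
      obtain ⟨j, hj1, hjr⟩ := hconn θ0 u t 0
      set h0 : Hist S A 0 := (fun _ => u, Fin.elim0) with hh0
      have hlast : h0.1 (Fin.last 0) = u := rfl
      have hrp := hjr h0 hlast
      have hP := reach_pos_path p pol hp_nonneg hpol_nonneg θ0 j 0 h0 t hrp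
      rw [hlast] at hP
      exact ⟨j, u, hu, hP⟩
    choose mfun ufun humu hupath using hpathex
    set k : ℕ := 1 + Finset.univ.sup mfun with hkdef
    have hk0 : 0 < k := by omega
    have hmk : ∀ x, mfun x + 1 ≤ k := by
      intro x
      have := Finset.le_sup (f := mfun) (Finset.mem_univ x)
      omega
    set α : ℕ → ℝ := fun i => (1 / (k : ℝ)) * (κ ^ k * ∏ t' ∈ Finset.range (i + k + 1), δ' t')
      with hαdef
    have hkR : (0 : ℝ) < 1 / (k : ℝ) := by positivity
    have hαpos : ∀ i, 0 < α i := by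
      intro i
      have : 0 < ∏ t' ∈ Finset.range (i + k + 1), δ' t' :=
        Finset.prod_pos fun t' _ => hδ'pos t'
      positivity
    refine ⟨k, 1, α, fun _ => 1, fun _ => 1, fun _ => one_pos, fun _ => one_pos,
      hk0, one_pos, hαpos, ?_, fun _ => zero_le_one, fun _ => zero_le_one, ?_, ?_⟩
    · -- α non-increasing
      intro i j hij
      rw [hαdef]
      have hsub : Finset.range (i + k + 1) ⊆ Finset.range (j + k + 1) :=
        Finset.range_subset_range.2 (by omega)
      have := prod_subset_le_aux hsub δ' (fun x => le_of_lt (hδ'pos x)) hδ'1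
      have hκk : (0:ℝ) ≤ κ ^ k := le_of_lt (pow_pos hκpos k)
      have h2 : κ ^ k * ∏ t' ∈ Finset.range (j + k + 1), δ' t' ≤
          κ ^ k * ∏ t' ∈ Finset.range (i + k + 1), δ' t' :=
        mul_le_mul_of_nonneg_left this hκk
      exact mul_le_mul_of_nonneg_left h2 (le_of_lt hkR)
    · -- the minorization bound
      rintro θ i h ⟨t, b⟩
      set s := h.1 (Fin.last i) with hs
      set a := h.2 (Fin.last i) with ha
      set x : S × A × S := (s, a, t) with hx
      have hfirst : 0 < p θ0 s a (ufun x) := humu x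
      have hpath : PathN (p θ0) (mfun x) (ufun x) t := hupath x
      have hlow := condSA_lower p pol θ0 hp_nonneg hpol_nonneg κ hκpos hκle δ' hδ'pos hδ'le
        (mfun x) (ufun x) t hpath θ i h b hfirst
      have hmem : mfun x + 1 ∈ Finset.Icc 1 k := by
        simp only [Finset.mem_Icc]
        exact ⟨by omega, hmk x⟩
      have hsum : condSA p pol θ (mfun x + 1) i h (t, b) ≤
          ∑ j ∈ Finset.Icc 1 k, condSA p pol θ j i h (t, b) :=
        Finset.single_le_sum
          (fun j _ => condSA_nonneg p pol hp_nonneg hpol_nonneg θ j i h (t, b)) hmem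
      have hpow : κ ^ k ≤ κ ^ (mfun x + 1) :=
        pow_le_pow_of_le_one (le_of_lt hκpos) hκ1 (hmk x)
      have hsubp : Finset.Ico (i + 1) (i + mfun x + 2) ⊆ Finset.range (i + k + 1) := by
        intro y hy
        simp only [Finset.mem_Ico] at hy
        simp only [Finset.mem_range]
        have := hmk x
        omega
      have hprodle : ∏ t' ∈ Finset.range (i + k + 1), δ' t' ≤
          ∏ t' ∈ Finset.Ico (i + 1) (i + mfun x + 2), δ' t' :=
        prod_subset_le_aux hsubp δ' (fun y => le_of_lt (hδ'pos y)) hδ'1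
      have hchain : κ ^ k * ∏ t' ∈ Finset.range (i + k + 1), δ' t' ≤
          ∑ j ∈ Finset.Icc 1 k, condSA p pol θ j i h (t, b) := by
        have h1 : κ ^ k * ∏ t' ∈ Finset.range (i + k + 1), δ' t' ≤
            κ ^ (mfun x + 1) * ∏ t' ∈ Finset.Ico (i + 1) (i + mfun x + 2), δ' t' := by
          have hb1 : (0:ℝ) ≤ κ ^ k := le_of_lt (pow_pos hκpos k)
          have hb2 : (0:ℝ) ≤ ∏ t' ∈ Finset.range (i + k + 1), δ' t' :=
            Finset.prod_nonneg fun y _ => le_of_lt (hδ'pos y)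
          exact mul_le_mul hpow hprodle hb2 (le_of_lt (pow_pos hκpos _))
        linarith
      rw [mul_one]
      rw [hαdef]
      simp only
      exact mul_le_mul_of_nonneg_left hchain (le_of_lt hkR)
    · -- the majorization bound
      intro θ i h sa
      exact condSA_le_one p pol hp_nonneg hp_sum hpol_nonneg hpol_sum θ 1 i h sa
  · -- degenerate case: S or A empty
    refine ⟨1, 1, fun _ => 1, fun _ => 1, fun _ => 1, fun _ => one_pos, fun _ => one_pos,
      one_pos, one_pos, fun _ => one_pos, fun _ _ _ => le_refl 1,
      fun _ => zero_le_one, fun _ => zero_le_one, ?_, ?_⟩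
    · intro θ i h sa
      exact absurd ⟨⟨h.1 0⟩, ⟨h.2 0⟩⟩ hSA
    · intro θ i h sa
      exact condSA_le_one p pol hp_nonneg hp_sum hpol_nonneg hpol_sum θ 1 i h sa


end
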